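/- Assume p is odd. Then the elements X := m(1,0) and Y := m(0,q−1) generate H as a Lie algebra: the smallest Lie subalgebra of H containing X and Y is H itself. -/
import Mathlib

open scoped BigOperators

/-- Binomial coefficient of integers, zero unless `0 ≤ b ≤ a`. -/
def intChoose (a b : ℤ) : ℤ :=
  if 0 ≤ b ∧ b ≤ a then (a.toNat.choose b.toNat : ℤ) else 0

/-- The structure constant `N(i,j,k,l)`. -/
def Ncoef (i j k l : ℤ) : ℤ :=
  intChoose (i + k - 1) i * intChoose (j + l - 1) (j - 1) -
    intChoose (i + k - 1) (i - 1) * intChoose (j + l - 1) j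

variable (F : Type*) [Field F]

/-- The underlying space of `H(2;(n1,n2);Φ(1))`, with basis indexed by `Fin r × Fin q`. -/
abbrev Hsp (r q : ℕ) : Type _ := Fin r × Fin q → F

/-- The divided power monomial `x^(i) y^(j)`, read as `0` when out of range. -/
noncomputable def mm (r q : ℕ) (i j : ℤ) : Hsp F r q :=
  if h : 0 ≤ i ∧ i < (r : ℤ) ∧ 0 ≤ j ∧ j < (q : ℤ) then
    Pi.single (⟨i.toNat, by omega⟩, ⟨j.toNat, by omega⟩) 1
  else 0

/-- The bracket on basis elements of `H(2;(n1,n2);Φ(1))`. -/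
noncomputable def bB (r q : ℕ) (a b : Fin r × Fin q) : Hsp F r q :=
  if 0 < (a.1 : ℤ) + (b.1 : ℤ) then
    ((Ncoef (a.1 : ℤ) (a.2 : ℤ) (b.1 : ℤ) (b.2 : ℤ) : ℤ) : F) •
      mm F r q ((a.1 : ℤ) + (b.1 : ℤ) - 1) ((a.2 : ℤ) + (b.2 : ℤ) - 1)
  else
    ((intChoose ((a.2 : ℤ) + (b.2 : ℤ) - 1) (b.2 : ℤ) -
        intChoose ((a.2 : ℤ) + (b.2 : ℤ) - 1) (a.2 : ℤ) : ℤ) : F) •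
      mm F r q ((r : ℤ) - 1) ((a.2 : ℤ) + (b.2 : ℤ) - 1)

/-- The bilinear bracket of `H(2;(n1,n2);Φ(1))`, extending `bB` bilinearly. -/
noncomputable def br (r q : ℕ) (u v : Hsp F r q) : Hsp F r q :=
  ∑ a : Fin r × Fin q, ∑ b : Fin r × Fin q, (u a * v b) • bB F r q a b

/-! ### Auxiliary lemmas -/

lemma intChoose_neg' {a b : ℤ} (h : b < 0) : intChoose a b = 0 := by
  simp [intChoose]; omega

lemma intChoose_gt' {a b : ℤ} (h : a < b) : intChoose a b = 0 := by
  simp [intChoose]; omega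

lemma intChoose_zero' {a : ℤ} (h : 0 ≤ a) : intChoose a 0 = 1 := by
  simp [intChoose, h]

lemma intChoose_self' {a : ℤ} (h : 0 ≤ a) : intChoose a a = 1 := by
  simp [intChoose, h]

lemma intChoose_one' {a : ℤ} (h : 0 ≤ a) : intChoose a 1 = a := by
  rcases eq_or_lt_of_le h with h'|h'
  · rw [intChoose_gt' (by omega)]; omega
  · unfold intChoose
    rw [if_pos (by omega)]
    simp [Nat.choose_one_right]; omega

lemma intChoose_pred' {a : ℤ} (h : 1 ≤ a) : intChoose a (a - 1) = a := by
  unfold intChoose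
  rw [if_pos (by omega)]
  have h1 : (a-1).toNat = a.toNat - 1 := by omega
  rw [h1, Nat.choose_symm (by omega), Nat.choose_one_right]
  omega

lemma Ncoef_X (k l : ℤ) (hk : 0 ≤ k) (hl : 1 ≤ l) : Ncoef 1 0 k l = -1 := by
  unfold Ncoef
  rw [show (1:ℤ)+k-1 = k by ring, show (0:ℤ)+l-1 = l-1 by ring,
    show (0:ℤ)-1 = -1 by ring, show (1:ℤ)-1 = 0 by ring]
  rw [intChoose_neg' (a := l-1) (b := -1) (by omega), intChoose_zero' hk,
    intChoose_zero' (show (0:ℤ) ≤ l-1 by omega)]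
  ring

lemma Ncoef_Y (q k : ℤ) (hq : 2 ≤ q) (hk : 1 ≤ k) : Ncoef 0 (q-1) k 1 = q - 1 := by
  unfold Ncoef
  rw [show (0:ℤ)+k-1 = k-1 by ring, show (q-1:ℤ)+1-1 = q-1 by ring,
    show (0:ℤ)-1 = -1 by ring]
  rw [intChoose_neg' (a := k-1) (b := -1) (by omega),
    intChoose_zero' (show (0:ℤ) ≤ k-1 by omega),
    intChoose_pred' (show (1:ℤ) ≤ q-1 by omega), intChoose_self' (by omega)]
  ring

lemma mm_in {r q : ℕ} (i j : ℕ) (hi : i < r) (hj : j < q) :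
    mm F r q i j = Pi.single ((⟨i, hi⟩ : Fin r), (⟨j, hj⟩ : Fin q)) 1 := by
  rw [mm, dif_pos (by constructor <;> omega)]
  simp

lemma br_single {r q : ℕ} (a b : Fin r × Fin q) :
    br F r q (Pi.single a 1) (Pi.single b 1) = bB F r q a b := by
  unfold br
  rw [Finset.sum_eq_single a]
  · rw [Finset.sum_eq_single b]
    · simp
    · intro c _ hc; simp [Pi.single_apply, hc]
    · simp
  · intro c _ hc; simp [Pi.single_apply, hc]
  · simp

lemma bB_X {r q : ℕ} (h1r : 1 < r) (h0q : 0 < q) (k l : ℕ) (hk : k < r) (hl : l < q)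
    (hl1 : 1 ≤ l) :
    bB F r q ((⟨1, h1r⟩ : Fin r), (⟨0, h0q⟩ : Fin q)) ((⟨k, hk⟩ : Fin r), (⟨l, hl⟩ : Fin q))
      = (-1 : F) • (Pi.single ((⟨k, hk⟩ : Fin r), (⟨l - 1, by omega⟩ : Fin q)) 1 : Hsp F r q) := by
  rw [bB, if_pos (by simp; omega)]
  simp only [Fin.val_mk]
  rw [show ((1:ℕ):ℤ) + (k:ℤ) - 1 = ((k:ℕ):ℤ) by push_cast; ring,
    show ((0:ℕ):ℤ) + (l:ℤ) - 1 = ((l-1:ℕ):ℤ) by push_cast [hl1]; ring]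
  rw [mm_in F k (l-1) hk (by omega)]
  congr 1
  rw [show ((1:ℕ):ℤ) = (1:ℤ) by norm_num, show ((0:ℕ):ℤ) = (0:ℤ) by norm_num]
  rw [Ncoef_X (k:ℤ) (l:ℤ) (by positivity) (by exact_mod_cast hl1)]
  norm_num

lemma bB_Y {r q : ℕ} (h0r : 0 < r) (hq : 2 ≤ q) (k : ℕ) (hk : k < r) (hk1 : 1 ≤ k) :
    bB F r q ((⟨0, h0r⟩ : Fin r), (⟨q-1, by omega⟩ : Fin q))
        ((⟨k, hk⟩ : Fin r), (⟨1, by omega⟩ : Fin q))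
      = (((q:ℤ) - 1 : ℤ) : F) •
          (Pi.single ((⟨k-1, by omega⟩ : Fin r), (⟨q-1, by omega⟩ : Fin q)) 1 : Hsp F r q) := by
  rw [bB, if_pos (by simp; omega)]
  simp only [Fin.val_mk]
  rw [show ((0:ℕ):ℤ) + (k:ℤ) - 1 = ((k-1:ℕ):ℤ) by push_cast [hk1]; ring,
    show ((q-1:ℕ):ℤ) + ((1:ℕ):ℤ) - 1 = ((q-1:ℕ):ℤ) by push_cast; ring]
  rw [mm_in F (k-1) (q-1) (by omega) (by omega)]
  congr 1
  rw [show ((0:ℕ):ℤ) = (0:ℤ) by norm_num, show ((1:ℕ):ℤ) = (1:ℤ) by norm_num,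
    show ((q-1:ℕ):ℤ) = (q:ℤ) - 1 by push_cast [show 1 ≤ q by omega]; ring]
  rw [Ncoef_Y (q:ℤ) (k:ℤ) (by exact_mod_cast hq) (by exact_mod_cast hk1)]

lemma bB_Y0 {r q : ℕ} (h0r : 0 < r) (hq : 2 ≤ q) :
    bB F r q ((⟨0, h0r⟩ : Fin r), (⟨q-1, by omega⟩ : Fin q))
        ((⟨0, h0r⟩ : Fin r), (⟨1, by omega⟩ : Fin q))
      = (((q:ℤ) - 2 : ℤ) : F) •
          (Pi.single ((⟨r-1, by omega⟩ : Fin r), (⟨q-1, by omega⟩ : Fin q)) 1 : Hsp F r q) := by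
  rw [bB, if_neg (by simp)]
  simp only [Fin.val_mk]
  rw [show ((q-1:ℕ):ℤ) + ((1:ℕ):ℤ) - 1 = ((q-1:ℕ):ℤ) by push_cast; ring,
    show ((r:ℕ):ℤ) - 1 = ((r-1:ℕ):ℤ) by push_cast [show 1 ≤ r by omega]; ring]
  rw [mm_in F (r-1) (q-1) (by omega) (by omega)]
  congr 1
  rw [show ((q-1:ℕ):ℤ) = (q:ℤ) - 1 by push_cast [show 1 ≤ q by omega]; ring,
    show ((1:ℕ):ℤ) = (1:ℤ) by norm_num]
  rw [intChoose_one' (by omega), intChoose_self' (by omega)]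
  push_cast
  ring

lemma gen {r q : ℕ} (hr : 2 ≤ r) (hq : 3 ≤ q) (hqF : ((q:ℕ) : F) = 0) (h2 : (2:F) ≠ 0)
    (S : Submodule F (Hsp F r q))
    (hX : Pi.single ((⟨1, by omega⟩ : Fin r), (⟨0, by omega⟩ : Fin q)) 1 ∈ S)
    (hY : Pi.single ((⟨0, by omega⟩ : Fin r), (⟨q-1, by omega⟩ : Fin q)) 1 ∈ S)
    (hbr : ∀ u ∈ S, ∀ v ∈ S, br F r q u v ∈ S) : S = ⊤ := by
  -- applying ad X lowers the second index by one
  have stepX : ∀ (k l : ℕ) (hk : k < r) (hl : l < q), 1 ≤ l →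
      Pi.single ((⟨k, hk⟩ : Fin r), (⟨l, hl⟩ : Fin q)) 1 ∈ S →
      Pi.single ((⟨k, hk⟩ : Fin r), (⟨l-1, by omega⟩ : Fin q)) 1 ∈ S := by
    intro k l hk hl hl1 hmem
    have h := hbr _ hX _ hmem
    rw [br_single, bB_X F (by omega) (by omega) k l hk hl hl1] at h
    have h' := S.smul_mem (-1 : F) h
    rwa [smul_smul, neg_mul_neg, one_mul, one_smul] at h'
  -- a full row from its top element
  have rowAll : ∀ (k : ℕ) (hk : k < r),
      Pi.single ((⟨k, hk⟩ : Fin r), (⟨q-1, by omega⟩ : Fin q)) 1 ∈ S →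
      ∀ (l : ℕ) (hl : l < q), Pi.single ((⟨k, hk⟩ : Fin r), (⟨l, hl⟩ : Fin q)) 1 ∈ S := by
    intro k hk htop
    have key : ∀ t (l' : ℕ) (hl' : l' < q), l' + t = q - 1 →
        Pi.single ((⟨k, hk⟩ : Fin r), (⟨l', hl'⟩ : Fin q)) 1 ∈ S := by
      intro t
      induction t with
      | zero =>
        intro l' hl' he
        have : l' = q - 1 := by omega
        subst this; exact htop
      | succ n ih =>
        intro l' hl' he
        have hmem := ih (l'+1) (by omega) (by omega)
        have h := stepX k (l'+1) hk (by omega) (by omega) hmem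
        simpa using h
    intro l hl
    exact key (q-1-l) l hl (by omega)
  -- applying ad Y to m(k,1) with k ≥ 1
  have stepY : ∀ (k : ℕ) (hk : k < r), 1 ≤ k →
      Pi.single ((⟨k, hk⟩ : Fin r), (⟨1, by omega⟩ : Fin q)) 1 ∈ S →
      Pi.single ((⟨k-1, by omega⟩ : Fin r), (⟨q-1, by omega⟩ : Fin q)) 1 ∈ S := by
    intro k hk hk1 hmem
    have h := hbr _ hY _ hmem
    rw [br_single, bB_Y F (by omega) (by omega) k hk hk1] at h
    have hc : (((q:ℤ) - 1 : ℤ) : F) = -1 := by push_cast; rw [hqF]; ring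
    rw [hc] at h
    have h' := S.smul_mem (-1 : F) h
    rwa [smul_smul, neg_mul_neg, one_mul, one_smul] at h'
  -- row 0 is in S
  have row0 : ∀ (l : ℕ) (hl : l < q),
      Pi.single ((⟨0, by omega⟩ : Fin r), (⟨l, hl⟩ : Fin q)) 1 ∈ S :=
    rowAll 0 (by omega) hY
  -- the top corner m(r-1, q-1)
  have htop : Pi.single ((⟨r-1, by omega⟩ : Fin r), (⟨q-1, by omega⟩ : Fin q)) 1 ∈ S := by
    have h := hbr _ hY _ (row0 1 (by omega))
    rw [br_single, bB_Y0 F (by omega) (by omega)] at h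
    have hc : (((q:ℤ) - 2 : ℤ) : F) = -2 := by push_cast; rw [hqF]; ring
    rw [hc] at h
    have h' := S.smul_mem ((-2 : F)⁻¹) h
    rwa [smul_smul, inv_mul_cancel₀ (by simpa using h2), one_smul] at h'
  -- all rows
  have allrows : ∀ t (k : ℕ) (hk : k < r), k + t = r - 1 →
      Pi.single ((⟨k, hk⟩ : Fin r), (⟨q-1, by omega⟩ : Fin q)) 1 ∈ S := by
    intro t
    induction t with
    | zero =>
      intro k hk he
      have : k = r - 1 := by omega
      subst this; exact htop
    | succ n ih =>
      intro k hk he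
      have hmem := ih (k+1) (by omega) (by omega)
      have h1 := rowAll (k+1) (by omega) hmem 1 (by omega)
      have h := stepY (k+1) (by omega) (by omega) h1
      simpa using h
  have allb : ∀ a : Fin r × Fin q, Pi.single a 1 ∈ S := by
    rintro ⟨⟨k, hk⟩, ⟨l, hl⟩⟩
    exact rowAll k hk (allrows (r-1-k) k hk (by omega)) l hl
  rw [eq_top_iff]
  intro v _
  have hv : v = ∑ a : Fin r × Fin q, v a • (Pi.single a 1 : Hsp F r q) := by
    ext b
    rw [Finset.sum_apply]
    simp [Pi.single_apply]
  rw [hv]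
  exact Submodule.sum_mem S fun a _ => S.smul_mem _ (allb a)

/-- `X = m(1,0)` and `Y = m(0,q-1)` generate `H` as a Lie algebra, i.e.
every subspace containing them and closed under the bracket is the whole of `H`. -/
theorem stmt2 (p : ℕ) (hp : p.Prime) (hodd : p ≠ 2) (F : Type*) [Field F] [CharP F p]
    (n1 n2 : ℕ) (hn1 : 0 < n1) (hn2 : 0 < n2) :
    ∀ S : Submodule F (Hsp F (p ^ n1) (p ^ n2)),
      mm F (p ^ n1) (p ^ n2) 1 0 ∈ S →
      mm F (p ^ n1) (p ^ n2) 0 ((p ^ n2 : ℤ) - 1) ∈ S →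
      (∀ u ∈ S, ∀ v ∈ S, br F (p ^ n1) (p ^ n2) u v ∈ S) →
      S = ⊤ := by
  intro S hX hY hbr
  have hp3 : 3 ≤ p := by
    have := hp.two_le
    omega
  have hr : 2 ≤ p ^ n1 := le_trans (by omega) (Nat.le_self_pow (by omega) p)
  have hq : 3 ≤ p ^ n2 := le_trans hp3 (Nat.le_self_pow (by omega) p)
  have hqF : ((p ^ n2 : ℕ) : F) = 0 := by
    push_cast
    rw [CharP.cast_eq_zero F p]
    exact zero_pow (by omega)
  have h2 : (2 : F) ≠ 0 := by
    intro h
    have h' : ((2:ℕ) : F) = 0 := by exact_mod_cast h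
    have := (CharP.cast_eq_zero_iff F p 2).mp h'
    have := (Nat.prime_dvd_prime_iff_eq hp Nat.prime_two).mp this
    exact hodd this
  have hX' : Pi.single ((⟨1, by omega⟩ : Fin (p^n1)), (⟨0, by omega⟩ : Fin (p^n2))) 1 ∈ S := by
    rw [show (1:ℤ) = ((1:ℕ):ℤ) from by norm_num,
      show (0:ℤ) = ((0:ℕ):ℤ) from by norm_num] at hX
    rw [mm_in F 1 0 (by omega) (by omega)] at hX
    exact hX
  have hY' : Pi.single ((⟨0, by omega⟩ : Fin (p^n1)),
      (⟨p^n2 - 1, by omega⟩ : Fin (p^n2))) 1 ∈ S := by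
    rw [show ((p ^ n2 : ℤ) - 1) = ((p^n2 - 1 : ℕ):ℤ) from by
        push_cast [show 1 ≤ p^n2 by omega]; ring] at hY
    rw [show (0:ℤ) = ((0:ℕ):ℤ) from by norm_num] at hY
    rw [mm_in F 0 (p^n2 - 1) (by omega) (by omega)] at hY
    exact hY
  exact gen F hr hq hqF h2 S hX' hY' hbr
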